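/- arXiv:1711.03941 — 6 statements merged into one kernel-verified Lean document; each statement's English description precedes it below -/
import Mathlib

section
/- Let N ≥ 1 and let Z : ℝ^N → ℝ be differentiable and strictly concave with a global maximizer h* ∈ ℝ^N. Let ε > 0, let c_1,…,c_N : ℝ → ℝ be functions with c_i(t) ≥ ε for all t, and let h : ℝ → ℝ^N be differentiable with h_i'(t) = c_i(t)·(∂Z/∂h_i)(h(t)) for each i and t. Then the function Y(t) = Z(h*) − Z(h(t)) satisfies: (a) Y(t) ≥ 0 for all t, with Y(t) = 0 if and only if h(t) = h*; (b) Y is differentiable with Y'(t) = −Σ_{i=1}^N c_i(t)·((∂Z/∂h_i)(h(t)))² ≤ −ε·‖∇Z(h(t))‖²; and (c) Y'(t) < 0 whenever h(t) ≠ h*. -/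
open Set InnerProductSpace

/-!
By the chain rule, along the flow `Y' = -⟪∇Z, h'⟫ = -∑ cᵢ (∂ᵢZ)² ≤ -ε‖∇Z‖²`. Restricted to a
segment, a concave function has slopes bounded by its derivative at the starting point, so a
critical point of `Z` is a global maximizer; strict concavity makes the maximizer unique. Hence
`Y` vanishes only at `h*`, and away from `h*` the gradient is nonzero, so `Y' < 0`.
-/

theorem ConcaveOn.isMaxOn_of_hasFDerivAt_eq_zero {E : Type*} [NormedAddCommGroup E]
    [NormedSpace ℝ E] {f : E → ℝ} {s : Set E} {x : E} (hf : ConcaveOn ℝ s f) (hx : x ∈ s)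
    (hfx : HasFDerivAt f (0 : E →L[ℝ] ℝ) x) : IsMaxOn f s x := by
  intro y hy
  let ℓ := AffineMap.lineMap (k := ℝ) x y
  have hg : HasDerivAt (f ∘ ℓ) 0 0 := by
    simpa using hfx.comp_hasDerivAt_of_eq (0 : ℝ) AffineMap.hasDerivAt_lineMap (by simp)
  have := (hf.comp_affineMap ℓ).slope_le_of_hasDerivAt (x := 0) (y := 1)
    (by simpa [ℓ] using hx) (by simpa [ℓ] using hy) zero_lt_one hg
  simpa [ℓ, slope_def_field] using this

theorem HasGradientAt.comp_hasDerivAt {F : Type*} [NormedAddCommGroup F]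
    [InnerProductSpace ℝ F] [CompleteSpace F] {f : F → ℝ} {g : ℝ → F} {f' g' : F} {t : ℝ}
    (hf : HasGradientAt f f' (g t)) (hg : HasDerivAt g g' t) :
    HasDerivAt (fun s => f (g s)) ⟪f', g'⟫_ℝ t := by
  have := (hasGradientAt_iff_hasFDerivAt.mp hf).comp_hasDerivAt t hg
  simp only [toDual_apply_apply] at this
  exact this

theorem EuclideanSpace.deriv_apply {ι : Type*} [Fintype ι] {h : ℝ → EuclideanSpace ℝ ι} {t : ℝ}
    (hh : DifferentiableAt ℝ h t) (i : ι) : deriv (fun s => h s i) t = deriv h t i :=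
  ((PiLp.hasFDerivAt_apply 2 (h t) i).comp_hasDerivAt t hh.hasDerivAt).deriv

theorem EuclideanSpace.mul_norm_sq_le_sum_mul_sq {ι : Type*} [Fintype ι] {ε : ℝ} {w : ι → ℝ}
    (hw : ∀ i, ε ≤ w i) (x : EuclideanSpace ℝ ι) : ε * ‖x‖ ^ 2 ≤ ∑ i, w i * x i ^ 2 := by
  rw [EuclideanSpace.norm_sq_eq, Finset.mul_sum]
  refine Finset.sum_le_sum fun i _ => ?_
  rw [Real.norm_eq_abs, sq_abs]
  exact mul_le_mul_of_nonneg_right (hw i) (sq_nonneg _)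

theorem hasDerivAt_comp_of_deriv_apply_eq_mul_gradient {ι : Type*} [Fintype ι]
    {Z : EuclideanSpace ℝ ι → ℝ} {h : ℝ → EuclideanSpace ℝ ι} {w : ι → ℝ} {t : ℝ}
    (hZ : DifferentiableAt ℝ Z (h t)) (hh : DifferentiableAt ℝ h t)
    (hflow : ∀ i, deriv (fun s => h s i) t = w i * gradient Z (h t) i) :
    HasDerivAt (fun s => Z (h s)) (∑ i, w i * gradient Z (h t) i ^ 2) t := by
  have hvel : deriv h t = WithLp.toLp 2 (fun i => w i * gradient Z (h t) i) := by
    ext i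
    rw [← EuclideanSpace.deriv_apply hh, hflow]
  convert hZ.hasGradientAt.comp_hasDerivAt hh.hasDerivAt using 1
  rw [hvel, PiLp.inner_apply]
  refine Finset.sum_congr rfl fun i _ => ?_
  simp only [RCLike.inner_apply, conj_trivial]
  ring

theorem stmt_3_general (N : ℕ)
    (Z : EuclideanSpace ℝ (Fin N) → ℝ)
    (hZdiff : Differentiable ℝ Z)
    (hZconc : StrictConcaveOn ℝ Set.univ Z)
    (hstar : EuclideanSpace ℝ (Fin N))
    (hmax : ∀ x, Z x ≤ Z hstar)
    (ε : ℝ) (hε : 0 < ε)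
    (c : Fin N → ℝ → ℝ) (hc : ∀ i t, ε ≤ c i t)
    (h : ℝ → EuclideanSpace ℝ (Fin N))
    (hdiff : Differentiable ℝ h)
    (hode : ∀ i t, deriv (fun s => h s i) t = c i t * gradient Z (h t) i)
    (Y : ℝ → ℝ) (hY : Y = fun t => Z hstar - Z (h t)) :
    (∀ t, 0 ≤ Y t ∧ (Y t = 0 ↔ h t = hstar)) ∧
    (∀ t, HasDerivAt Y (-∑ i, c i t * (gradient Z (h t) i) ^ 2) t ∧
      -∑ i, c i t * (gradient Z (h t) i) ^ 2 ≤ -(ε * ‖gradient Z (h t)‖ ^ 2)) ∧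
    (∀ t, h t ≠ hstar → deriv Y t < 0) := by
  subst hY
  have hZmax : IsMaxOn Z univ hstar := fun x _ => hmax x
  have hcrit : ∀ x, gradient Z x = 0 → x = hstar := fun x hx => by
    have hfd : HasFDerivAt Z (0 : EuclideanSpace ℝ (Fin N) →L[ℝ] ℝ) x := by
      simpa [← toDual_gradient, hx] using (hZdiff x).hasFDerivAt
    exact hZconc.eq_of_isMaxOn (hZconc.concaveOn.isMaxOn_of_hasFDerivAt_eq_zero trivial hfd)
      hZmax trivial trivial
  have hderiv : ∀ t, HasDerivAt (fun t => Z hstar - Z (h t))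
      (-∑ i, c i t * gradient Z (h t) i ^ 2) t := fun t =>
    (hasDerivAt_comp_of_deriv_apply_eq_mul_gradient (hZdiff _) (hdiff t) (hode · t)).const_sub _
  have hbound : ∀ t, -∑ i, c i t * gradient Z (h t) i ^ 2 ≤ -(ε * ‖gradient Z (h t)‖ ^ 2) :=
    fun t => neg_le_neg (EuclideanSpace.mul_norm_sq_le_sum_mul_sq (hc · t) _)
  refine ⟨fun t => ⟨sub_nonneg.2 (hmax _), sub_eq_zero.trans ⟨fun hZt => ?_, fun ht => ht ▸ rfl⟩⟩,
    fun t => ⟨hderiv t, hbound t⟩, fun t ht => ?_⟩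
  · exact hZconc.eq_of_isMaxOn (fun y _ => hZt ▸ hmax y) hZmax trivial trivial
  · have hgrad : 0 < ‖gradient Z (h t)‖ := norm_pos_iff.2 fun h0 => ht (hcrit _ h0)
    rw [(hderiv t).deriv]
    exact (hbound t).trans_lt (by simpa using mul_pos hε (pow_pos hgrad 2))

/-- Lyapunov-function argument for the convergence of the primal algorithm
(Theorem 4.3): if `Z` is differentiable and strictly concave with global
maximizer `hstar`, and the trajectory `h` follows the scaled gradient dynamics
`(h i)'(t) = c i t * ∂Z/∂h_i (h t)` with `c i t ≥ ε > 0`, then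
`Y(t) = Z(hstar) - Z(h t)` is nonnegative, vanishes exactly at the optimum,
has derivative `-∑ i, c i t * (∂Z/∂h_i (h t))² ≤ -ε‖∇Z(h t)‖²`, and is
strictly decreasing away from the optimum. -/
theorem stmt_3 (N : ℕ) (hN : 1 ≤ N)
    (Z : EuclideanSpace ℝ (Fin N) → ℝ)
    (hZdiff : Differentiable ℝ Z)
    (hZconc : StrictConcaveOn ℝ Set.univ Z)
    (hstar : EuclideanSpace ℝ (Fin N))
    (hmax : ∀ x, Z x ≤ Z hstar)
    (ε : ℝ) (hε : 0 < ε)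
    (c : Fin N → ℝ → ℝ) (hc : ∀ i t, ε ≤ c i t)
    (h : ℝ → EuclideanSpace ℝ (Fin N))
    (hdiff : Differentiable ℝ h)
    (hode : ∀ i t, deriv (fun s => h s i) t = c i t * gradient Z (h t) i)
    (Y : ℝ → ℝ) (hY : Y = fun t => Z hstar - Z (h t)) :
    (∀ t, 0 ≤ Y t ∧ (Y t = 0 ↔ h t = hstar)) ∧
    (∀ t, HasDerivAt Y (-∑ i, c i t * (gradient Z (h t) i) ^ 2) t ∧
      -∑ i, c i t * (gradient Z (h t) i) ^ 2 ≤ -(ε * ‖gradient Z (h t)‖ ^ 2)) ∧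
    (∀ t, h t ≠ hstar → deriv Y t < 0) :=
  stmt_3_general N Z hZdiff hZconc hstar hmax ε hε c hc h hdiff hode Y hY
end

section
/- Consider the problem G-U-MCDP: contents i ∈ D (D finite nonempty), paths p ∈ P^i (finite nonempty) of lengths |p| ≥ 1 with position l of path p located at node v_p(l) ∈ V (V finite) with capacity B_v > 0, discount ψ ∈ (0,1], and for each (i,p,l) a function U_{ip} : [0,1] → ℝ that is continuous and strictly increasing; the objective is Φ(h) = Σ_{i∈D} Σ_{p∈P^i} Σ_{l=1}^{|p|} ψ^{|p|−l} U_{ip}(h^{(p)}_{il}), and a point h with 0 ≤ h^{(p)}_{il} ≤ 1 is feasible if for each node v ∈ V, Σ_{i∈D} (1 − ∏ over (p,l) with p ∈ P^i and v_p(l) = v of (1 − h^{(p)}_{il})) ≤ B_v, and Σ_{l=1}^{|p|} h^{(p)}_{il} ≤ 1 for each i and p ∈ P^i. If h is feasible and every one of these capacity constraints and per-path sum constraints holds with strict inequality, then h is not a maximizer of Φ over the feasible set: there exists a feasible h' with Φ(h') > Φ(h). Consequently, at any maximizer at least one of the constraints is active (holds with equality). -/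
lemma prod_sub_prod_le_aux {α : Type*} (s : Finset α) (a b : α → ℝ)
    (h0 : ∀ j ∈ s, 0 ≤ b j) (h1 : ∀ j ∈ s, b j ≤ a j) (h2 : ∀ j ∈ s, a j ≤ 1) :
    ∏ j ∈ s, a j - ∏ j ∈ s, b j ≤ ∑ j ∈ s, (a j - b j) := by
  classical
  induction s using Finset.induction with
  | empty => simp
  | @insert j s hj ih =>
    rw [Finset.prod_insert hj, Finset.prod_insert hj, Finset.sum_insert hj]
    have h0' : ∀ k ∈ s, 0 ≤ b k := fun k hk => h0 k (Finset.mem_insert_of_mem hk)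
    have h1' : ∀ k ∈ s, b k ≤ a k := fun k hk => h1 k (Finset.mem_insert_of_mem hk)
    have h2' : ∀ k ∈ s, a k ≤ 1 := fun k hk => h2 k (Finset.mem_insert_of_mem hk)
    have hb0 : 0 ≤ ∏ k ∈ s, b k := Finset.prod_nonneg h0'
    have hba : ∏ k ∈ s, b k ≤ ∏ k ∈ s, a k := Finset.prod_le_prod h0' h1'
    have ha1 : ∏ k ∈ s, a k ≤ 1 :=
      Finset.prod_le_one (fun k hk => (h0' k hk).trans (h1' k hk)) h2'
    have hb1 : ∏ k ∈ s, b k ≤ 1 := hba.trans ha1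
    have haj1 : a j ≤ 1 := h2 j (Finset.mem_insert_self _ _)
    have hbj0 : 0 ≤ b j := h0 j (Finset.mem_insert_self _ _)
    have hbja : b j ≤ a j := h1 j (Finset.mem_insert_self _ _)
    have ihs := ih h0' h1' h2'
    have e1 : a j * (∏ k ∈ s, a k - ∏ k ∈ s, b k) ≤ ∏ k ∈ s, a k - ∏ k ∈ s, b k :=
      mul_le_of_le_one_left (by linarith) haj1
    have e2 : (a j - b j) * ∏ k ∈ s, b k ≤ a j - b j :=
      mul_le_of_le_one_right (by linarith) hb1
    nlinarith [e1, e2, ihs]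

/-- Lemma 5.3 for **G-U-MCDP** (general cache network, common contents along
different paths): if all node-capacity constraints
`∑_i (1 - ∏_{(p,l): node = v}(1 - h^{(p)}_{il})) ≤ B_v` and all per-path
constraints `∑_l h^{(p)}_{il} ≤ 1` hold with strict inequality at a feasible
point `h`, then `h` is not a maximizer of the discounted utility objective:
some feasible `h'` achieves a strictly larger objective value.  (Hence at any
maximizer at least one of these constraints is active.) -/
theorem stmt_8 (ι V : Type) [Fintype ι] [Nonempty ι] [Fintype V] [DecidableEq V]
    (P : ι → Type) [∀ i, Fintype (P i)] [∀ i, Nonempty (P i)]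
    (len : ∀ i, P i → ℕ) (hlen : ∀ i p, 1 ≤ len i p)
    (node : ∀ i (p : P i), Fin (len i p) → V)
    (B : V → ℝ) (hB : ∀ v, 0 < B v)
    (ψ : ℝ) (hψ : ψ ∈ Set.Ioc (0:ℝ) 1)
    (U : ∀ i, P i → ℝ → ℝ)
    (hUcont : ∀ i p, ContinuousOn (U i p) (Set.Icc 0 1))
    (hUmono : ∀ i p, StrictMonoOn (U i p) (Set.Icc 0 1))
    (F : Set (∀ i, ∀ p : P i, Fin (len i p) → ℝ))
    (hF : F = {h : ∀ i, ∀ p : P i, Fin (len i p) → ℝ |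
        (∀ i (p : P i) l, h i p l ∈ Set.Icc (0:ℝ) 1) ∧
        (∀ v : V, (∑ i, (1 - ∏ p : P i, ∏ l : Fin (len i p),
            if node i p l = v then 1 - h i p l else 1)) ≤ B v) ∧
        (∀ i (p : P i), ∑ l, h i p l ≤ 1)})
    (Φ : (∀ i, ∀ p : P i, Fin (len i p) → ℝ) → ℝ)
    (hΦ : Φ = fun h => ∑ i, ∑ p : P i, ∑ l : Fin (len i p),
        ψ ^ (len i p - 1 - (l : ℕ)) * U i p (h i p l))
    (h : ∀ i, ∀ p : P i, Fin (len i p) → ℝ)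
    (hfeas : h ∈ F)
    (hstrict1 : ∀ v : V, (∑ i, (1 - ∏ p : P i, ∏ l : Fin (len i p),
        if node i p l = v then 1 - h i p l else 1)) < B v)
    (hstrict2 : ∀ i (p : P i), ∑ l, h i p l < 1) :
    ∃ h' ∈ F, Φ h < Φ h' := by
  classical
  subst hF hΦ
  simp only [Set.mem_setOf_eq] at hfeas
  obtain ⟨hbox, hcap, hpath⟩ := hfeas
  set i₀ := Classical.arbitrary ι with hi₀
  set p₀ := Classical.arbitrary (P i₀) with hp₀
  set l₀ : Fin (len i₀ p₀) := ⟨0, hlen i₀ p₀⟩ with hl₀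
  set S : V → ℝ := fun v => ∑ i, (1 - ∏ p : P i, ∏ l : Fin (len i p),
      if node i p l = v then 1 - h i p l else 1) with hSdef
  set s : Finset ℝ :=
    insert (1 - ∑ l, h i₀ p₀ l) (Finset.univ.image (fun v => B v - S v)) with hsdef
  have hsne : s.Nonempty := ⟨_, Finset.mem_insert_self _ _⟩
  set ε := s.min' hsne with hεdef
  have hεpos : 0 < ε := by
    rw [hεdef, Finset.lt_min'_iff]
    intro b hb
    rw [hsdef, Finset.mem_insert] at hb
    rcases hb with rfl | hb
    · linarith [hstrict2 i₀ p₀]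
    · rcases Finset.mem_image.1 hb with ⟨v, -, rfl⟩
      linarith [hstrict1 v]
  have hε1 : ε ≤ 1 - ∑ l, h i₀ p₀ l :=
    Finset.min'_le _ _ (Finset.mem_insert_self _ _)
  have hεv : ∀ v, ε ≤ B v - S v := fun v =>
    Finset.min'_le _ _ (Finset.mem_insert_of_mem
      (Finset.mem_image_of_mem _ (Finset.mem_univ v)))
  set h' : ∀ i, ∀ p : P i, Fin (len i p) → ℝ :=
    Function.update h i₀ (Function.update (h i₀) p₀
      (Function.update (h i₀ p₀) l₀ (h i₀ p₀ l₀ + ε))) with hh'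
  -- basic values of h'
  have hne1 : ∀ i, i ≠ i₀ → h' i = h i := fun i hi => Function.update_of_ne hi _ _
  have hne2 : ∀ p : P i₀, p ≠ p₀ → h' i₀ p = h i₀ p := by
    intro p hp
    rw [hh']
    simp only [Function.update_self]
    exact Function.update_of_ne hp _ _
  have hne3 : ∀ l : Fin (len i₀ p₀), l ≠ l₀ → h' i₀ p₀ l = h i₀ p₀ l := by
    intro l hl
    rw [hh']
    simp only [Function.update_self]
    exact Function.update_of_ne hl _ _
  have htarget : h' i₀ p₀ l₀ = h i₀ p₀ l₀ + ε := by
    rw [hh']; simp only [Function.update_self]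
  have hle : ∀ i (p : P i) l, h i p l ≤ h' i p l := by
    intro i p l
    rcases eq_or_ne i i₀ with rfl | hi
    · rcases eq_or_ne p p₀ with rfl | hp
      · rcases eq_or_ne l l₀ with rfl | hl
        · rw [htarget]; linarith
        · rw [hne3 l hl]
      · rw [hne2 p hp]
    · rw [hne1 i hi]
  have hsingle : h i₀ p₀ l₀ ≤ ∑ l, h i₀ p₀ l :=
    Finset.single_le_sum (fun l _ => (hbox i₀ p₀ l).1) (Finset.mem_univ l₀)
  have h'box : ∀ i (p : P i) l, h' i p l ∈ Set.Icc (0:ℝ) 1 := by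
    intro i p l
    rcases eq_or_ne i i₀ with rfl | hi
    · rcases eq_or_ne p p₀ with rfl | hp
      · rcases eq_or_ne l l₀ with rfl | hl
        · rw [htarget]
          exact ⟨by linarith [(hbox i₀ p₀ l₀).1], by linarith⟩
        · rw [hne3 l hl]; exact hbox _ _ _
      · rw [hne2 p hp]; exact hbox _ _ _
    · rw [hne1 i hi]; exact hbox _ _ _
  -- sums over paths for h'
  have hsum_target : ∑ l, h' i₀ p₀ l = (∑ l, h i₀ p₀ l) + ε := by
    have e : ∀ l, h' i₀ p₀ l =
        Function.update (h i₀ p₀) l₀ (h i₀ p₀ l₀ + ε) l := by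
      intro l; rw [hh']; simp only [Function.update_self]
    rw [Finset.sum_congr rfl (fun l _ => e l),
      Finset.sum_update_of_mem (Finset.mem_univ l₀)]
    have e2 : ∑ l, h i₀ p₀ l =
        h i₀ p₀ l₀ + ∑ l ∈ Finset.univ \ {l₀}, h i₀ p₀ l := by
      rw [Finset.sum_eq_sum_sdiff_singleton_add (Finset.mem_univ l₀)]; ring
    rw [e2]; ring
  have h'path : ∀ i (p : P i), ∑ l, h' i p l ≤ 1 := by
    intro i p
    rcases eq_or_ne i i₀ with rfl | hi
    · rcases eq_or_ne p p₀ with rfl | hp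
      · rw [hsum_target]; linarith
      · simp only [hne2 p hp]; exact hpath _ _
    · simp only [hne1 i hi]; exact hpath _ _
  -- capacity constraints for h'
  have h'cap : ∀ v : V, (∑ i, (1 - ∏ p : P i, ∏ l : Fin (len i p),
      if node i p l = v then 1 - h' i p l else 1)) ≤ B v := by
    intro v
    have hsplit : ∀ i : ι,
        (1 - ∏ p : P i, ∏ l : Fin (len i p),
          if node i p l = v then 1 - h' i p l else 1)
        ≤ (1 - ∏ p : P i, ∏ l : Fin (len i p),
          if node i p l = v then 1 - h i p l else 1) + (if i = i₀ then ε else 0) := by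
      intro i
      rcases eq_or_ne i i₀ with rfl | hi
      · rw [if_pos rfl]
        set a : P i₀ → ℝ := fun p => ∏ l : Fin (len i₀ p),
          if node i₀ p l = v then 1 - h i₀ p l else 1 with hadef
        set b : P i₀ → ℝ := fun p => ∏ l : Fin (len i₀ p),
          if node i₀ p l = v then 1 - h' i₀ p l else 1 with hbdef
        have f0 : ∀ (p : P i₀) (l : Fin (len i₀ p)),
            (0:ℝ) ≤ (if node i₀ p l = v then 1 - h' i₀ p l else 1) := by
          intro p l; split
          · linarith [(h'box i₀ p l).2]
          · norm_num
        have fba : ∀ (p : P i₀) (l : Fin (len i₀ p)),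
            (if node i₀ p l = v then 1 - h' i₀ p l else 1)
            ≤ (if node i₀ p l = v then 1 - h i₀ p l else 1) := by
          intro p l; split
          · linarith [hle i₀ p l]
          · exact le_rfl
        have fa1 : ∀ (p : P i₀) (l : Fin (len i₀ p)),
            (if node i₀ p l = v then 1 - h i₀ p l else 1) ≤ 1 := by
          intro p l; split
          · linarith [(hbox i₀ p l).1]
          · exact le_rfl
        have hb0 : ∀ p ∈ Finset.univ, 0 ≤ b p :=
          fun p _ => Finset.prod_nonneg (fun l _ => f0 p l)
        have hba : ∀ p ∈ Finset.univ, b p ≤ a p :=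
          fun p _ => Finset.prod_le_prod (fun l _ => f0 p l) (fun l _ => fba p l)
        have ha1 : ∀ p ∈ Finset.univ, a p ≤ 1 :=
          fun p _ => Finset.prod_le_one
            (fun l _ => (f0 p l).trans (fba p l)) (fun l _ => fa1 p l)
        have main : ∏ p, a p - ∏ p, b p ≤ ∑ p, (a p - b p) :=
          prod_sub_prod_le_aux _ a b hb0 hba ha1
        have hsum : ∑ p, (a p - b p) ≤ ε := by
          have hzero : ∀ p ∈ Finset.univ, p ≠ p₀ → a p - b p = 0 := by
            intro p _ hp
            have : b p = a p := by
              rw [hadef, hbdef]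
              exact Finset.prod_congr rfl (fun l _ => by rw [hne2 p hp])
            rw [this]; ring
          rw [Finset.sum_eq_single_of_mem p₀ (Finset.mem_univ _) hzero]
          have inner : a p₀ - b p₀ ≤ ∑ l : Fin (len i₀ p₀),
              ((if node i₀ p₀ l = v then 1 - h i₀ p₀ l else 1)
               - (if node i₀ p₀ l = v then 1 - h' i₀ p₀ l else 1)) :=
            prod_sub_prod_le_aux _ _ _ (fun l _ => f0 p₀ l)
              (fun l _ => fba p₀ l) (fun l _ => fa1 p₀ l)
          have hzero' : ∀ l ∈ Finset.univ, l ≠ l₀ →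
              ((if node i₀ p₀ l = v then 1 - h i₀ p₀ l else 1)
               - (if node i₀ p₀ l = v then 1 - h' i₀ p₀ l else 1)) = 0 := by
            intro l _ hl; rw [hne3 l hl]; ring
          have innersum : ∑ l : Fin (len i₀ p₀),
              ((if node i₀ p₀ l = v then 1 - h i₀ p₀ l else 1)
               - (if node i₀ p₀ l = v then 1 - h' i₀ p₀ l else 1)) ≤ ε := by
            rw [Finset.sum_eq_single_of_mem l₀ (Finset.mem_univ _) hzero']
            rcases eq_or_ne (node i₀ p₀ l₀) v with hc | hc
            · rw [if_pos hc, if_pos hc, htarget]; linarith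
            · rw [if_neg hc, if_neg hc]; linarith
          linarith
        linarith
      · rw [if_neg hi, add_zero]
        simp only [hne1 i hi]
        exact le_rfl
    calc (∑ i, (1 - ∏ p : P i, ∏ l : Fin (len i p),
          if node i p l = v then 1 - h' i p l else 1))
        ≤ ∑ i, ((1 - ∏ p : P i, ∏ l : Fin (len i p),
          if node i p l = v then 1 - h i p l else 1) + (if i = i₀ then ε else 0)) :=
          Finset.sum_le_sum (fun i _ => hsplit i)
      _ = S v + ε := by
          rw [Finset.sum_add_distrib, Finset.sum_ite_eq' Finset.univ i₀ (fun _ => ε),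
            if_pos (Finset.mem_univ i₀), hSdef]
      _ ≤ B v := by linarith [hεv v]
  -- objective strictly increases
  refine ⟨h', ⟨h'box, h'cap, h'path⟩, ?_⟩
  have hUle : ∀ i (p : P i) l, U i p (h i p l) ≤ U i p (h' i p l) := fun i p l =>
    (hUmono i p).monotoneOn (hbox i p l) (h'box i p l) (hle i p l)
  have hterm : ∀ i (p : P i) (l : Fin (len i p)),
      ψ ^ (len i p - 1 - (l : ℕ)) * U i p (h i p l)
      ≤ ψ ^ (len i p - 1 - (l : ℕ)) * U i p (h' i p l) := fun i p l =>
    mul_le_mul_of_nonneg_left (hUle i p l) (pow_nonneg hψ.1.le _)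
  refine Finset.sum_lt_sum (fun i _ => Finset.sum_le_sum fun p _ =>
    Finset.sum_le_sum fun l _ => hterm i p l) ⟨i₀, Finset.mem_univ _, ?_⟩
  refine Finset.sum_lt_sum (fun p _ => Finset.sum_le_sum fun l _ => hterm i₀ p l)
    ⟨p₀, Finset.mem_univ _, ?_⟩
  refine Finset.sum_lt_sum (fun l _ => hterm i₀ p₀ l) ⟨l₀, Finset.mem_univ _, ?_⟩
  have hlt : h i₀ p₀ l₀ < h' i₀ p₀ l₀ := by rw [htarget]; linarith
  exact mul_lt_mul_of_pos_left
    (hUmono i₀ p₀ (hbox i₀ p₀ l₀) (h'box i₀ p₀ l₀) hlt) (pow_pos hψ.1 _)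
end

section
/- Fix L ≥ 1, λ > 0 and T_1,…,T_L > 0. Let P be the (L+1)×(L+1) matrix indexed by states {0,1,…,L} with P(0,1) = 1; P(l,l−1) = e^{−λ T_l} and P(l,l+1) = 1 − e^{−λ T_l} for 1 ≤ l ≤ L−1; P(L,L−1) = e^{−λ T_L} and P(L,L) = 1 − e^{−λ T_L}; and all other entries zero. Define π_0 = 1/(1 + Σ_{j=1}^{L} e^{λ T_j} ∏_{s=1}^{j−1}(e^{λ T_s} − 1)), and π_l = π_0 · e^{λ T_l} · ∏_{s=1}^{l−1}(e^{λ T_s} − 1) for l = 1,…,L (empty products equal 1). Then π = (π_0,…,π_L) is a probability vector (all entries positive, summing to 1) satisfying π P = π. -/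
/-!
The chain is a birth–death chain on `{0, …, L}`, so `π` is stationary as soon as it satisfies
detailed balance across every edge `(l, l + 1)`. Writing `a_l = e^{λ T_l}`, both probability
flows across that edge equal `π_0 ∏_{s ≤ l} (a_s - 1)`: the flow up is
`π_0 a_l ∏_{s < l} (a_s - 1) · (1 - a_l⁻¹)` and the flow down is
`π_0 a_{l+1} ∏_{s ≤ l} (a_s - 1) · a_{l+1}⁻¹`. Normalisation is the choice of `π_0`.
-/

open Finset

section IteSums

variable {M : Type*} [AddCommMonoid M] {n a b : ℕ}

theorem Fin.sum_univ_ite_val_eq (ha : a < n) (c : M) :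
    ∑ y : Fin n, (if (y : ℕ) = a then c else 0) = c := by
  rw [Fin.sum_univ_eq_sum_range (fun i => if i = a then c else 0), sum_ite_eq',
    if_pos (mem_range.2 ha)]

theorem Fin.sum_univ_ite_val_eq_ite_val_eq (ha : a < n) (hb : b < n) (hab : a ≠ b) (c d : M) :
    ∑ y : Fin n, (if (y : ℕ) = a then c else if (y : ℕ) = b then d else 0) = c + d := by
  have split : ∀ y : Fin n, (if (y : ℕ) = a then c else if (y : ℕ) = b then d else 0) =
      (if (y : ℕ) = a then c else 0) + (if (y : ℕ) = b then d else 0) := by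
    intro y
    by_cases hya : (y : ℕ) = a
    · rw [if_pos hya, if_pos hya, if_neg (hya ▸ hab), add_zero]
    · rw [if_neg hya, if_neg hya, zero_add]
  simp only [split, sum_add_distrib, Fin.sum_univ_ite_val_eq ha, Fin.sum_univ_ite_val_eq hb]

end IteSums

namespace Matrix

variable {R : Type*} [CommSemiring R]

theorem sum_mul_apply_eq_of_detailed_balance {ι : Type*} [Fintype ι] {P : Matrix ι ι R}
    {π : ι → R} (hrow : ∀ x, ∑ y, P x y = 1) (hbal : ∀ x y, π x * P x y = π y * P y x)
    (y : ι) : ∑ x, π x * P x y = π y := by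
  simp only [hbal _ y, ← mul_sum, hrow, mul_one]

theorem detailed_balance_of_tridiagonal {n : ℕ} {P : Matrix (Fin n) (Fin n) R} {π : Fin n → R}
    (hfar : ∀ x y : Fin n, (x : ℕ) + 2 ≤ y ∨ (y : ℕ) + 2 ≤ x → P x y = 0)
    (hadj : ∀ x y : Fin n, (y : ℕ) = x + 1 → π x * P x y = π y * P y x) (x y : Fin n) :
    π x * P x y = π y * P y x := by
  rcases lt_trichotomy (x : ℕ) y with h | h | h
  · by_cases hxy : (y : ℕ) = x + 1
    · exact hadj x y hxy
    · rw [hfar x y (by omega), hfar y x (by omega), mul_zero, mul_zero]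
  · rw [Fin.ext h]
  · by_cases hyx : (x : ℕ) = y + 1
    · exact (hadj y x hyx).symm
    · rw [hfar x y (by omega), hfar y x (by omega), mul_zero, mul_zero]

end Matrix

theorem Fin.sum_univ_succ_eq_mul_one_add {R : Type*} [CommSemiring R] {L : ℕ}
    {π : Fin (L + 1) → R} {w : ℕ → R} (hπ : ∀ x : Fin (L + 1), 1 ≤ (x : ℕ) → π x = π 0 * w x) :
    ∑ x, π x = π 0 * (1 + ∑ j ∈ Icc 1 L, w j) := by
  have hsucc : ∀ i : Fin L, π i.succ = π 0 * w (i + 1) := fun i => by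
    rw [hπ i.succ (by simp), Fin.val_succ]
  rw [Fin.sum_univ_succ, sum_congr rfl fun i _ => hsucc i, ← mul_sum,
    Fin.sum_univ_eq_sum_range (fun i => w (i + 1)) L, range_eq_Ico, sum_Ico_add' w, zero_add,
    Ico_add_one_right_eq_Icc, mul_add, mul_one]

section MCDP

variable {K : Type*} {L : ℕ}

/-- `p l` is the probability of moving down from state `l`; state `0` always moves up. -/
def mcdpMatrix [Ring K] (L : ℕ) (p : ℕ → K) : Matrix (Fin (L + 1)) (Fin (L + 1)) K :=
  Matrix.of fun x y =>
    if (x : ℕ) = 0 then (if (y : ℕ) = 1 then 1 else 0)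
    else if (x : ℕ) = L then
      (if (y : ℕ) = L - 1 then p L else if (y : ℕ) = L then 1 - p L else 0)
    else
      (if (y : ℕ) = (x : ℕ) - 1 then p x else if (y : ℕ) = (x : ℕ) + 1 then 1 - p x else 0)

section Ring

variable [Ring K] {p : ℕ → K} {x y : Fin (L + 1)}

theorem mcdpMatrix_apply :
    mcdpMatrix L p x y =
      if (x : ℕ) = 0 then (if (y : ℕ) = 1 then 1 else 0)
      else if (x : ℕ) = L then
        (if (y : ℕ) = L - 1 then p L else if (y : ℕ) = L then 1 - p L else 0)
      else
        (if (y : ℕ) = (x : ℕ) - 1 then p x else if (y : ℕ) = (x : ℕ) + 1 then 1 - p x else 0) :=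
  rfl

theorem mcdpMatrix_apply_of_far (h : (x : ℕ) + 2 ≤ y ∨ (y : ℕ) + 2 ≤ x) :
    mcdpMatrix L p x y = 0 := by
  have := y.isLt
  rw [mcdpMatrix_apply]
  split_ifs <;> first | rfl | omega

theorem mcdpMatrix_apply_pred (h : (x : ℕ) = y + 1) : mcdpMatrix L p x y = p x := by
  have := x.isLt
  rw [mcdpMatrix_apply]
  split_ifs <;> first | rfl | omega | (congr 1; omega)

theorem mcdpMatrix_apply_zero_one (hx : (x : ℕ) = 0) (hy : (y : ℕ) = 1) :
    mcdpMatrix L p x y = 1 := by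
  rw [mcdpMatrix_apply, if_pos hx, if_pos hy]

theorem mcdpMatrix_apply_succ (hx : 1 ≤ (x : ℕ)) (h : (y : ℕ) = x + 1) :
    mcdpMatrix L p x y = 1 - p x := by
  have := y.isLt
  rw [mcdpMatrix_apply]
  split_ifs <;> first | rfl | omega

theorem sum_mcdpMatrix_apply (hL : 1 ≤ L) (x : Fin (L + 1)) : ∑ y, mcdpMatrix L p x y = 1 := by
  have := x.isLt
  simp only [mcdpMatrix_apply]
  split_ifs
  · exact Fin.sum_univ_ite_val_eq (by omega) 1
  · rw [Fin.sum_univ_ite_val_eq_ite_val_eq (by omega) (by omega) (by omega), add_sub_cancel]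
  · rw [Fin.sum_univ_ite_val_eq_ite_val_eq (by omega) (by omega) (by omega), add_sub_cancel]

end Ring

/-- `π_l / π_0` when `a l = e^{λ T_l}`. -/
def mcdpWeight [CommRing K] (a : ℕ → K) (l : ℕ) : K :=
  a l * ∏ s ∈ Icc 1 (l - 1), (a s - 1)

theorem mcdpWeight_pos [CommRing K] [LinearOrder K] [IsStrictOrderedRing K] {a : ℕ → K} {l : ℕ}
    (ha : ∀ l, 1 ≤ l → l ≤ L → 1 < a l) (hl1 : 1 ≤ l) (hlL : l ≤ L) :
    0 < mcdpWeight a l :=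
  mul_pos (zero_lt_one.trans (ha l hl1 hlL)) (prod_pos fun s hs => by
    have := mem_Icc.1 hs
    exact sub_pos.2 (ha s this.1 (by omega)))

section Field

variable [Field K] {a : ℕ → K}

theorem mcdpWeight_succ_mul_inv {l : ℕ} (ha : a (l + 1) ≠ 0) :
    mcdpWeight a (l + 1) * (a (l + 1))⁻¹ = ∏ s ∈ Icc 1 l, (a s - 1) := by
  rw [mcdpWeight, Nat.add_sub_cancel, mul_comm, ← mul_assoc, inv_mul_cancel₀ ha, one_mul]

theorem mcdpWeight_mul_one_sub_inv {l : ℕ} (hl : 1 ≤ l) (ha : a l ≠ 0) :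
    mcdpWeight a l * (1 - (a l)⁻¹) = ∏ s ∈ Icc 1 l, (a s - 1) := by
  obtain ⟨k, rfl⟩ := Nat.exists_eq_add_of_le' hl
  rw [mcdpWeight, prod_Icc_succ_top (by omega), Nat.add_sub_cancel]
  field_simp

theorem mcdpMatrix_detailed_balance (ha : ∀ l, 1 ≤ l → l ≤ L → a l ≠ 0) {π : Fin (L + 1) → K}
    (hπ : ∀ x : Fin (L + 1), 1 ≤ (x : ℕ) → π x = π 0 * mcdpWeight a x) (x y : Fin (L + 1)) :
    π x * mcdpMatrix L (fun l => (a l)⁻¹) x y = π y * mcdpMatrix L (fun l => (a l)⁻¹) y x := by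
  refine Matrix.detailed_balance_of_tridiagonal (fun x y h => mcdpMatrix_apply_of_far h)
    (fun x y hxy => ?_) x y
  have := y.isLt
  rw [mcdpMatrix_apply_pred hxy, hπ y (by omega), mul_assoc, hxy,
    mcdpWeight_succ_mul_inv (ha _ (by omega) (by omega))]
  by_cases hx : (x : ℕ) = 0
  · obtain rfl : x = 0 := Fin.ext hx
    rw [mcdpMatrix_apply_zero_one hx (by omega), hx]
    simp
  · rw [mcdpMatrix_apply_succ (by omega) hxy, hπ x (by omega), mul_assoc,
      mcdpWeight_mul_one_sub_inv (by omega) (ha _ (by omega) (by omega))]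

end Field

end MCDP

/-- Stationary distribution of the MCDP embedded Markov chain on a linear
network of `L` caches (states `0, 1, …, L`, state `0` = server): the vector
`π` with `π_0 = 1/(1 + ∑_{j=1}^L e^{λT_j} ∏_{s=1}^{j-1}(e^{λT_s}-1))` and
`π_l = π_0 e^{λT_l} ∏_{s=1}^{l-1}(e^{λT_s}-1)` is a probability vector
satisfying `π P = π` for the MCDP transition matrix `P`. -/
theorem stmt_10 (L : ℕ) (hL : 1 ≤ L) (lam : ℝ) (hlam : 0 < lam)
    (T : ℕ → ℝ) (hT : ∀ j, 1 ≤ j → j ≤ L → 0 < T j)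
    (P : Matrix (Fin (L + 1)) (Fin (L + 1)) ℝ)
    (hP : ∀ x y : Fin (L + 1), P x y =
      if (x : ℕ) = 0 then (if (y : ℕ) = 1 then 1 else 0)
      else if (x : ℕ) = L then
        (if (y : ℕ) = L - 1 then Real.exp (-(lam * T L))
         else if (y : ℕ) = L then 1 - Real.exp (-(lam * T L)) else 0)
      else
        (if (y : ℕ) = (x : ℕ) - 1 then Real.exp (-(lam * T (x : ℕ)))
         else if (y : ℕ) = (x : ℕ) + 1 then 1 - Real.exp (-(lam * T (x : ℕ)))
         else 0))
    (π : Fin (L + 1) → ℝ)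
    (hπ0 : π 0 = 1 / (1 + ∑ j ∈ Finset.Icc 1 L, Real.exp (lam * T j) *
        ∏ s ∈ Finset.Icc 1 (j - 1), (Real.exp (lam * T s) - 1)))
    (hπ : ∀ x : Fin (L + 1), 1 ≤ (x : ℕ) →
        π x = π 0 * Real.exp (lam * T (x : ℕ)) *
          ∏ s ∈ Finset.Icc 1 ((x : ℕ) - 1), (Real.exp (lam * T s) - 1)) :
    (∀ x, 0 < π x) ∧ (∑ x, π x = 1) ∧ (∀ y, ∑ x, π x * P x y = π y) := by
  set a : ℕ → ℝ := fun l => Real.exp (lam * T l)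
  have ha : ∀ l, 1 ≤ l → l ≤ L → 1 < a l := fun l h1 h2 =>
    Real.one_lt_exp_iff.2 (mul_pos hlam (hT l h1 h2))
  have hPa : P = mcdpMatrix L fun l => (a l)⁻¹ := by
    ext x y
    simp only [hP, mcdpMatrix_apply, a, Real.exp_neg]
  have hπa : ∀ x : Fin (L + 1), 1 ≤ (x : ℕ) → π x = π 0 * mcdpWeight a x := fun x hx => by
    rw [hπ x hx, mul_assoc, mcdpWeight]
  have hS : 0 < 1 + ∑ j ∈ Icc 1 L, mcdpWeight a j :=
    add_pos_of_pos_of_nonneg one_pos (sum_nonneg fun j hj =>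
      (mcdpWeight_pos ha (mem_Icc.1 hj).1 (mem_Icc.1 hj).2).le)
  have hπ0' : π 0 = 1 / (1 + ∑ j ∈ Icc 1 L, mcdpWeight a j) := hπ0
  have hπ0pos : 0 < π 0 := hπ0' ▸ one_div_pos.2 hS
  refine ⟨fun x => ?_, ?_, ?_⟩
  · rcases Nat.eq_zero_or_pos x with hx | hx
    · rwa [show x = 0 from Fin.ext hx]
    · rw [hπa x hx]
      exact mul_pos hπ0pos (mcdpWeight_pos ha hx (Nat.lt_succ_iff.1 x.isLt))
  · rw [Fin.sum_univ_succ_eq_mul_one_add hπa, hπ0']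
    field_simp
  · rw [hPa]
    exact Matrix.sum_mul_apply_eq_of_detailed_balance (sum_mcdpMatrix_apply hL)
      (mcdpMatrix_detailed_balance (fun l h1 h2 => (zero_lt_one.trans (ha l h1 h2)).ne') hπa)
end

section
/- Fix L ≥ 2, λ > 0 and T_1,…,T_L > 0. Let P be the (L+1)×(L+1) matrix indexed by states {0,1,…,L} with P(l,0) = e^{−λ T_{l+1}} and P(l,l+1) = 1 − e^{−λ T_{l+1}} for 0 ≤ l ≤ L−1; P(L,0) = e^{−λ T_L} and P(L,L) = 1 − e^{−λ T_L}; and all other entries zero. Define π̃_0 = 1/(1 + Σ_{l=1}^{L−1} ∏_{j=1}^{l}(1 − e^{−λ T_j}) + e^{λ T_L} ∏_{j=1}^{L}(1 − e^{−λ T_j})), π̃_l = π̃_0 · ∏_{j=1}^{l}(1 − e^{−λ T_j}) for l = 1,…,L−1, and π̃_L = π̃_0 · e^{λ T_L} · ∏_{j=1}^{L}(1 − e^{−λ T_j}). Then π̃ = (π̃_0,…,π̃_L) is a probability vector (all entries positive, summing to 1) satisfying π̃ P = π̃. -/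
private noncomputable def mQ (lam : ℝ) (T : ℕ → ℝ) (l : ℕ) : ℝ :=
  ∏ j ∈ Finset.Icc 1 l, (1 - Real.exp (-(lam * T j)))

private lemma mQ_zero (lam : ℝ) (T : ℕ → ℝ) : mQ lam T 0 = 1 := by simp [mQ]

private lemma mQ_succ (lam : ℝ) (T : ℕ → ℝ) (l : ℕ) :
    mQ lam T (l + 1) = mQ lam T l * (1 - Real.exp (-(lam * T (l + 1)))) :=
  Finset.prod_Icc_succ_top (by omega) _

/-- Stationary distribution of the MCD embedded Markov chain on a linear
network of `L` caches (states `0, 1, …, L`, state `0` = server, observed at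
request epochs): the vector `π̃` with
`π̃_0 = 1/(1 + ∑_{l=1}^{L-1} ∏_{j=1}^{l}(1-e^{-λT_j})
            + e^{λT_L} ∏_{j=1}^{L}(1-e^{-λT_j}))`,
`π̃_l = π̃_0 ∏_{j=1}^{l}(1-e^{-λT_j})` for `1 ≤ l ≤ L-1`, and
`π̃_L = π̃_0 e^{λT_L} ∏_{j=1}^{L}(1-e^{-λT_j})` is a probability vector
satisfying `π̃ P = π̃` for the MCD transition matrix `P`. -/
theorem stmt_11 (L : ℕ) (hL : 2 ≤ L) (lam : ℝ) (hlam : 0 < lam)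
    (T : ℕ → ℝ) (hT : ∀ j, 1 ≤ j → j ≤ L → 0 < T j)
    (P : Matrix (Fin (L + 1)) (Fin (L + 1)) ℝ)
    (hP : ∀ x y : Fin (L + 1), P x y =
      if (x : ℕ) < L then
        (if (y : ℕ) = 0 then Real.exp (-(lam * T ((x : ℕ) + 1)))
         else if (y : ℕ) = (x : ℕ) + 1 then
           1 - Real.exp (-(lam * T ((x : ℕ) + 1)))
         else 0)
      else
        (if (y : ℕ) = 0 then Real.exp (-(lam * T L))
         else if (y : ℕ) = L then 1 - Real.exp (-(lam * T L)) else 0))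
    (π : Fin (L + 1) → ℝ)
    (hπ0 : π 0 = 1 / (1 + (∑ l ∈ Finset.Icc 1 (L - 1), ∏ j ∈ Finset.Icc 1 l,
          (1 - Real.exp (-(lam * T j)))) +
        Real.exp (lam * T L) * ∏ j ∈ Finset.Icc 1 L,
          (1 - Real.exp (-(lam * T j)))))
    (hπ : ∀ x : Fin (L + 1), 1 ≤ (x : ℕ) → (x : ℕ) ≤ L - 1 →
        π x = π 0 * ∏ j ∈ Finset.Icc 1 (x : ℕ), (1 - Real.exp (-(lam * T j))))
    (hπL : π (Fin.last L) = π 0 * Real.exp (lam * T L) *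
        ∏ j ∈ Finset.Icc 1 L, (1 - Real.exp (-(lam * T j)))) :
    (∀ x, 0 < π x) ∧ (∑ x, π x = 1) ∧ (∀ y, ∑ x, π x * P x y = π y) := by
  have hqpos : ∀ j, 1 ≤ j → j ≤ L → 0 < 1 - Real.exp (-(lam * T j)) := by
    intro j h1 h2
    have h3 : Real.exp (-(lam * T j)) < Real.exp 0 := by
      apply Real.exp_lt_exp.mpr
      have := hT j h1 h2
      nlinarith
    rw [Real.exp_zero] at h3
    linarith
  have hQpos : ∀ l, l ≤ L → 0 < mQ lam T l := by
    intro l hl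
    apply Finset.prod_pos
    intro j hj
    rw [Finset.mem_Icc] at hj
    exact hqpos j hj.1 (hj.2.trans hl)
  have hE : (0 : ℝ) < Real.exp (lam * T L) := Real.exp_pos _
  have hE1 : Real.exp (lam * T L) * Real.exp (-(lam * T L)) = 1 := by
    rw [← Real.exp_add]; simp
  have hπ0' : π 0 = 1 / (1 + (∑ l ∈ Finset.Icc 1 (L - 1), mQ lam T l) +
      Real.exp (lam * T L) * mQ lam T L) := hπ0
  have hπL' : π (Fin.last L) = π 0 * Real.exp (lam * T L) * mQ lam T L := hπL
  have hD : 0 < 1 + (∑ l ∈ Finset.Icc 1 (L - 1), mQ lam T l) +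
      Real.exp (lam * T L) * mQ lam T L := by
    have hS : 0 ≤ ∑ l ∈ Finset.Icc 1 (L - 1), mQ lam T l := by
      apply Finset.sum_nonneg
      intro l hl
      rw [Finset.mem_Icc] at hl
      exact le_of_lt (hQpos l (by omega))
    have := hQpos L le_rfl
    positivity
  have hDne : (1 + (∑ l ∈ Finset.Icc 1 (L - 1), mQ lam T l) +
      Real.exp (lam * T L) * mQ lam T L) ≠ 0 := ne_of_gt hD
  have hπ0pos : 0 < π 0 := by
    rw [hπ0']
    positivity
  have hkey : ∀ x : Fin (L + 1), (x : ℕ) ≤ L - 1 → π x = π 0 * mQ lam T (x : ℕ) := by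
    intro x hx
    rcases Nat.eq_zero_or_pos (x : ℕ) with h0 | h1
    · have hx0 : x = 0 := Fin.ext (by simpa using h0)
      rw [hx0]
      simp [mQ_zero]
    · exact hπ x h1 hx
  have hProw0 : ∀ x y : Fin (L + 1), (x : ℕ) < L → (y : ℕ) = 0 →
      P x y = Real.exp (-(lam * T ((x : ℕ) + 1))) := by
    intro x y h1 h2
    rw [hP, if_pos h1, if_pos h2]
  have hProwS : ∀ x y : Fin (L + 1), (x : ℕ) < L → (y : ℕ) = (x : ℕ) + 1 →
      P x y = 1 - Real.exp (-(lam * T ((x : ℕ) + 1))) := by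
    intro x y h1 h2
    rw [hP, if_pos h1, if_neg (by omega), if_pos h2]
  refine ⟨?_, ?_, ?_⟩
  · -- positivity
    intro x
    by_cases hx : (x : ℕ) ≤ L - 1
    · rw [hkey x hx]
      exact mul_pos hπ0pos (hQpos _ (by omega))
    · have hxL : x = Fin.last L := Fin.ext (by have := x.isLt; simp [Fin.val_last]; omega)
      rw [hxL, hπL']
      exact mul_pos (mul_pos hπ0pos hE) (hQpos L le_rfl)
  · -- sum = 1
    rw [Fin.sum_univ_castSucc]
    have hterm : ∀ x : Fin L, π (Fin.castSucc x) = π 0 * mQ lam T (x : ℕ) := by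
      intro x
      have hlt := x.isLt
      rw [hkey (Fin.castSucc x) (by simp only [Fin.coe_castSucc]; omega)]
      simp [Fin.coe_castSucc]
    rw [Finset.sum_congr rfl (fun x _ => hterm x), hπL']
    rw [← Finset.mul_sum, Fin.sum_univ_eq_sum_range (fun i => mQ lam T i) L]
    have hsplit : Finset.range L = insert 0 (Finset.Icc 1 (L - 1)) := by
      ext i
      simp only [Finset.mem_range, Finset.mem_insert, Finset.mem_Icc]
      omega
    rw [hsplit, Finset.sum_insert (by simp), mQ_zero, hπ0']
    field_simp
  · -- stationarity
    intro y
    by_cases hy0 : (y : ℕ) = 0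
    · have hy : y = 0 := Fin.ext (by simpa using hy0)
      subst hy
      rw [Fin.sum_univ_castSucc]
      have hterm : ∀ x : Fin L, π (Fin.castSucc x) * P (Fin.castSucc x) 0 =
          π 0 * (mQ lam T (x : ℕ) - mQ lam T ((x : ℕ) + 1)) := by
        intro x
        have hlt := x.isLt
        rw [hProw0 (Fin.castSucc x) 0 (by simp only [Fin.coe_castSucc]; omega) (by simp),
          hkey (Fin.castSucc x) (by simp only [Fin.coe_castSucc]; omega)]
        simp only [Fin.coe_castSucc]
        rw [mQ_succ]
        ring
      rw [Finset.sum_congr rfl (fun x _ => hterm x), ← Finset.mul_sum,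
        Fin.sum_univ_eq_sum_range (fun i => mQ lam T i - mQ lam T (i + 1)) L,
        Finset.sum_range_sub' (fun i => mQ lam T i) L, mQ_zero]
      have hPlast : P (Fin.last L) 0 = Real.exp (-(lam * T L)) := by
        rw [hP, if_neg (by simp [Fin.val_last]), if_pos (by simp)]
      rw [hPlast, hπL']
      linear_combination (π 0 * mQ lam T L) * hE1
    · by_cases hyL : (y : ℕ) = L
      · -- y = last
        have hy : y = Fin.last L := Fin.ext (by simp [Fin.val_last, hyL])
        subst hy
        rw [Fin.sum_univ_castSucc]
        have hx₀lt : L - 1 < L := by omega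
        set x₀ : Fin L := ⟨L - 1, hx₀lt⟩ with hx₀
        have hx₀v : (x₀ : ℕ) = L - 1 := rfl
        have hside : ∀ b ∈ Finset.univ, b ≠ x₀ →
            π (Fin.castSucc b) * P (Fin.castSucc b) (Fin.last L) = 0 := by
          intro b _ hb
          have hbv : (b : ℕ) ≠ L - 1 := by
            intro h
            exact hb (Fin.ext (by omega))
          have hblt : ((Fin.castSucc b : Fin (L + 1)) : ℕ) < L := b.isLt
          rw [hP, if_pos hblt,
            if_neg (by simp [Fin.val_last]; omega),
            if_neg (by simp only [Fin.val_last, Fin.coe_castSucc]; omega), mul_zero]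
        rw [Finset.sum_eq_single_of_mem x₀ (Finset.mem_univ _) hside]
        have hcv : ((Fin.castSucc x₀ : Fin (L + 1)) : ℕ) = L - 1 := rfl
        rw [hProwS (Fin.castSucc x₀) (Fin.last L) (by omega)
            (by simp only [Fin.val_last]; omega),
          hkey (Fin.castSucc x₀) (le_of_eq hcv)]
        have hPll : P (Fin.last L) (Fin.last L) = 1 - Real.exp (-(lam * T L)) := by
          rw [hP, if_neg (by simp [Fin.val_last]),
            if_neg (by simp [Fin.val_last]; omega),
            if_pos (by simp [Fin.val_last])]
        rw [hPll, hπL', hcv]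
        have h2 := mQ_succ lam T (L - 1)
        rw [show L - 1 + 1 = L from by omega] at h2
        rw [show L - 1 + 1 = L from by omega, h2]
        linear_combination (-(π 0 * mQ lam T (L - 1) * (1 - Real.exp (-(lam * T L))))) * hE1
      · -- middle case
        have hy1 : 1 ≤ (y : ℕ) := by omega
        have hy2 : (y : ℕ) ≤ L - 1 := by have := y.isLt; omega
        have hx₀lt : (y : ℕ) - 1 < L + 1 := by omega
        set x₀ : Fin (L + 1) := ⟨(y : ℕ) - 1, hx₀lt⟩ with hx₀
        have hx₀v : (x₀ : ℕ) = (y : ℕ) - 1 := rfl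
        have hside : ∀ b ∈ Finset.univ, b ≠ x₀ → π b * P b y = 0 := by
          intro b _ hb
          have hbv : (b : ℕ) ≠ (y : ℕ) - 1 := by
            intro h
            exact hb (Fin.ext (by omega))
          rw [hP]
          by_cases hbL : (b : ℕ) < L
          · rw [if_pos hbL, if_neg (by omega), if_neg (by omega), mul_zero]
          · rw [if_neg hbL, if_neg (by omega), if_neg (by omega), mul_zero]
        rw [Finset.sum_eq_single_of_mem x₀ (Finset.mem_univ _) hside]
        rw [hProwS x₀ y (by omega) (by omega), hkey x₀ (by omega), hkey y hy2]
        have h2 := mQ_succ lam T ((y : ℕ) - 1)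
        rw [show (y : ℕ) - 1 + 1 = (y : ℕ) from by omega] at h2
        rw [hx₀v, show (y : ℕ) - 1 + 1 = (y : ℕ) from by omega, h2]
        ring
end

section
/- Fix L ≥ 1, λ > 0 and T_1,…,T_L > 0. Let π_0 = 1/(1 + Σ_{j=1}^{L} e^{λ T_j} ∏_{s=1}^{j−1}(e^{λ T_s} − 1)) and π_l = π_0 e^{λ T_l} ∏_{s=1}^{l−1}(e^{λ T_s} − 1) for l = 1,…,L, and let E_0 = 1/λ and E_l = (1 − e^{−λ T_l})/λ for l = 1,…,L. Then for each l ∈ {1,…,L}, the time-average occupancy h_l = π_l E_l / (Σ_{k=0}^{L} π_k E_k) satisfies h_l = ∏_{j=1}^{l}(e^{λ T_j} − 1) / (1 + Σ_{k=1}^{L} ∏_{j=1}^{k}(e^{λ T_j} − 1)); in particular h_1 = (e^{λ T_1} − 1)/(1 + Σ_{j=1}^{L} ∏_{s=1}^{j}(e^{λ T_s} − 1)) and h_l = h_{l−1}·(e^{λ T_l} − 1) for l = 2,…,L. -/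
/-!
Write `x_j = e^{λT_j} - 1`. Since `e^{λT_l}(1 - e^{-λT_l}) = x_l`, the weight `π_l E_l` equals
`(π_0/λ) ∏_{j ≤ l} x_j`, while `π_0 E_0 = π_0/λ`. The common factor `π_0/λ` is positive because
every `x_j` is, so it cancels from the time-average fraction, leaving `∏_{j ≤ l} x_j` over
`1 + ∑_k ∏_{j ≤ k} x_j`.
-/

open Finset

lemma exp_mul_prod_Icc_pred_mul_one_sub_exp_neg (a : ℕ → ℝ) {l : ℕ} (hl : 1 ≤ l) :
    Real.exp (a l) * (∏ s ∈ Icc 1 (l - 1), (Real.exp (a s) - 1)) * (1 - Real.exp (-a l)) =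
      ∏ s ∈ Icc 1 l, (Real.exp (a s) - 1) := by
  obtain ⟨m, rfl⟩ : ∃ m, l = m + 1 := ⟨l - 1, by omega⟩
  have hexp : Real.exp (a (m + 1)) * (1 - Real.exp (-a (m + 1))) =
      Real.exp (a (m + 1)) - 1 := by
    rw [mul_sub, mul_one, ← Real.exp_add, add_neg_cancel, Real.exp_zero]
  rw [prod_Icc_succ_top (by omega), Nat.add_sub_cancel, ← hexp]
  ring

lemma sum_range_succ_eq_mul_one_add_sum_Icc {w p : ℕ → ℝ} {c : ℝ} {L : ℕ} (h0 : w 0 = c)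
    (hw : ∀ k ∈ Icc 1 L, w k = c * p k) :
    ∑ k ∈ range (L + 1), w k = c * (1 + ∑ k ∈ Icc 1 L, p k) := by
  rw [sum_range_eq_add_Ico _ (by omega : 0 < L + 1), Ico_add_one_right_eq_Icc, sum_congr rfl hw,
    ← mul_sum, h0, mul_add, mul_one]

lemma div_sum_range_succ_eq_of_eq_mul {w p : ℕ → ℝ} {c : ℝ} {L l : ℕ} (hc : c ≠ 0)
    (h0 : w 0 = c) (hw : ∀ k ∈ Icc 1 L, w k = c * p k) (hl : l ∈ Icc 1 L) :
    w l / ∑ k ∈ range (L + 1), w k = p l / (1 + ∑ k ∈ Icc 1 L, p k) := by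
  rw [sum_range_succ_eq_mul_one_add_sum_Icc h0 hw, hw l hl, mul_div_mul_left _ _ hc]

/-- Time-average occupancies of the MCDP chain give the hit probabilities (6):
with the stationary distribution `π` of the embedded chain, mean sojourn times
`E_0 = 1/λ`, `E_l = (1-e^{-λT_l})/λ`, the time-average occupancy
`h_l = π_l E_l / ∑_{k=0}^{L} π_k E_k` equals
`∏_{j=1}^{l}(e^{λT_j}-1) / (1 + ∑_{k=1}^{L}∏_{j=1}^{k}(e^{λT_j}-1))`;
in particular `h_1 = (e^{λT_1}-1)/(1 + ∑_{j=1}^{L}∏_{s=1}^{j}(e^{λT_s}-1))`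
and `h_l = h_{l-1}(e^{λT_l}-1)` for `l = 2, …, L`. -/
theorem stmt_12 (L : ℕ) (hL : 1 ≤ L) (lam : ℝ) (hlam : 0 < lam)
    (T : ℕ → ℝ) (hT : ∀ j, 1 ≤ j → j ≤ L → 0 < T j)
    (π E h : ℕ → ℝ)
    (hπ0 : π 0 = 1 / (1 + ∑ j ∈ Finset.Icc 1 L, Real.exp (lam * T j) *
        ∏ s ∈ Finset.Icc 1 (j - 1), (Real.exp (lam * T s) - 1)))
    (hπ : ∀ l, 1 ≤ l → l ≤ L → π l = π 0 * Real.exp (lam * T l) *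
        ∏ s ∈ Finset.Icc 1 (l - 1), (Real.exp (lam * T s) - 1))
    (hE0 : E 0 = 1 / lam)
    (hE : ∀ l, 1 ≤ l → l ≤ L → E l = (1 - Real.exp (-(lam * T l))) / lam)
    (hh : ∀ l, 1 ≤ l → l ≤ L →
        h l = π l * E l / (∑ k ∈ Finset.range (L + 1), π k * E k)) :
    (∀ l, 1 ≤ l → l ≤ L →
      h l = (∏ j ∈ Finset.Icc 1 l, (Real.exp (lam * T j) - 1)) /
        (1 + ∑ k ∈ Finset.Icc 1 L, ∏ j ∈ Finset.Icc 1 k,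
          (Real.exp (lam * T j) - 1))) ∧
    (h 1 = (Real.exp (lam * T 1) - 1) /
        (1 + ∑ j ∈ Finset.Icc 1 L, ∏ s ∈ Finset.Icc 1 j,
          (Real.exp (lam * T s) - 1))) ∧
    (∀ l, 2 ≤ l → l ≤ L → h l = h (l - 1) * (Real.exp (lam * T l) - 1)) := by
  have hprod_pos : ∀ m ≤ L, 0 < ∏ j ∈ Icc 1 m, (Real.exp (lam * T j) - 1) := fun m hm =>
    prod_pos fun j hj => sub_pos.mpr <| Real.one_lt_exp_iff.mpr <|
      mul_pos hlam (hT j (mem_Icc.mp hj).1 ((mem_Icc.mp hj).2.trans hm))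
  have hπ0_pos : 0 < π 0 := by
    rw [hπ0]
    refine one_div_pos.mpr (add_pos_of_pos_of_nonneg one_pos (sum_nonneg fun j hj => ?_))
    exact (mul_pos (Real.exp_pos _) (hprod_pos (j - 1) (by grind))).le
  have hweight : ∀ k ∈ Icc 1 L,
      π k * E k = π 0 / lam * ∏ j ∈ Icc 1 k, (Real.exp (lam * T j) - 1) := fun k hk => by
    obtain ⟨hk1, hkL⟩ := mem_Icc.mp hk
    rw [hπ k hk1 hkL, hE k hk1 hkL,
      ← exp_mul_prod_Icc_pred_mul_one_sub_exp_neg (fun j => lam * T j) hk1]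
    ring
  have hclosed : ∀ l, 1 ≤ l → l ≤ L →
      h l = (∏ j ∈ Icc 1 l, (Real.exp (lam * T j) - 1)) /
      (1 + ∑ k ∈ Icc 1 L, ∏ j ∈ Icc 1 k, (Real.exp (lam * T j) - 1)) := fun l hl1 hlL => by
    rw [hh l hl1 hlL]
    exact div_sum_range_succ_eq_of_eq_mul (div_pos hπ0_pos hlam).ne'
      (by rw [hE0, mul_one_div]) hweight (mem_Icc.mpr ⟨hl1, hlL⟩)
  refine ⟨hclosed, by simpa using hclosed 1 le_rfl hL, fun l hl2 hlL => ?_⟩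
  obtain ⟨m, rfl⟩ : ∃ m, l = m + 1 := ⟨l - 1, by omega⟩
  rw [hclosed _ (by omega) hlL, hclosed _ (by omega) (by omega), Nat.add_sub_cancel,
    prod_Icc_succ_top (by omega)]
  ring
end

section
/- Fix L ≥ 1, λ > 0, and real numbers h_1,…,h_L with h_l > 0 for all l and Σ_{l=1}^{L} h_l < 1. Define T_1 = (1/λ)·log(1 + h_1/(1 − (h_1 + ⋯ + h_L))) and T_l = (1/λ)·log(1 + h_l/h_{l−1}) for l = 2,…,L. Then T_l > 0 for all l, and the MCDP hit probabilities computed from these timers recover h: for every l ∈ {1,…,L}, ∏_{j=1}^{l}(e^{λ T_j} − 1) / (1 + Σ_{k=1}^{L} ∏_{j=1}^{k}(e^{λ T_j} − 1)) = h_l. -/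
/-!
Put `g 0 = 1 - ∑ h` and `g l = h l` for `l ≥ 1`. Then `e^{λ T_l} - 1 = g l / g (l - 1)` for every
`l`, so the products in the numerator telescope to `h l / (1 - ∑ h)`, and the denominator becomes
`1 + ∑ h / (1 - ∑ h) = 1 / (1 - ∑ h)`.
-/

open Finset Real

theorem Finset.prod_Icc_div_pred {G : Type*} [CommGroupWithZero G] {f : ℕ → G} {n : ℕ}
    (hn : n ≠ 0) (hf : ∀ j < n, f j ≠ 0) :
    ∏ j ∈ Icc 1 n, f j / f (j - 1) = f n / f 0 := by
  induction n with
  | zero => exact absurd rfl hn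
  | succ n ih =>
    rcases Nat.eq_zero_or_pos n with rfl | hpos
    · simp
    rw [prod_Icc_succ_top (by omega), ih hpos.ne' fun j hj => hf j (by omega), Nat.add_sub_cancel,
      div_mul_div_cancel₀' (hf n (by omega))]

theorem one_add_sum_div_one_sub_sum {ι K : Type*} [Field K] (s : Finset ι) (a : ι → K)
    (ha : ∑ i ∈ s, a i ≠ 1) :
    1 + ∑ i ∈ s, a i / (1 - ∑ i ∈ s, a i) = 1 / (1 - ∑ i ∈ s, a i) := by
  rw [← sum_div]
  field_simp [sub_ne_zero.mpr ha.symm]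
  ring

theorem exp_mul_one_div_mul_log_one_add {lam x : ℝ} (hlam : lam ≠ 0) (hx : -1 < x) :
    exp (lam * (1 / lam * log (1 + x))) - 1 = x := by
  rw [← mul_assoc, mul_one_div_cancel hlam, one_mul, exp_log (by linarith)]
  ring

theorem one_div_mul_log_one_add_pos {lam x : ℝ} (hlam : 0 < lam) (hx : 0 < x) :
    0 < 1 / lam * log (1 + x) :=
  mul_pos (one_div_pos.mpr hlam) (log_pos (by linarith))

theorem stmt_13_general (L : ℕ) (lam : ℝ) (hlam : 0 < lam)
    (h : ℕ → ℝ) (hpos : ∀ l, 1 ≤ l → l ≤ L → 0 < h l)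
    (hsum : ∑ l ∈ Finset.Icc 1 L, h l < 1)
    (T : ℕ → ℝ)
    (hT1 : T 1 = (1 / lam) *
        Real.log (1 + h 1 / (1 - ∑ l ∈ Finset.Icc 1 L, h l)))
    (hTl : ∀ l, 2 ≤ l → l ≤ L →
        T l = (1 / lam) * Real.log (1 + h l / h (l - 1))) :
    (∀ l, 1 ≤ l → l ≤ L → 0 < T l) ∧
    (∀ l, 1 ≤ l → l ≤ L →
      (∏ j ∈ Finset.Icc 1 l, (Real.exp (lam * T j) - 1)) /
        (1 + ∑ k ∈ Finset.Icc 1 L, ∏ j ∈ Finset.Icc 1 k,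
          (Real.exp (lam * T j) - 1)) = h l) := by
  set S := ∑ l ∈ Icc 1 L, h l
  set g := Function.update h 0 (1 - S)
  have hg_pos : ∀ l ≤ L, 0 < g l := by
    intro l hl
    rcases Nat.eq_zero_or_pos l with rfl | hl0
    · simpa [g] using hsum
    · simpa [g, hl0.ne'] using hpos l hl0 hl
  have hT : ∀ l, 1 ≤ l → l ≤ L → T l = 1 / lam * log (1 + g l / g (l - 1)) := by
    intro l hl1 hlL
    rcases hl1.eq_or_lt with rfl | hl2
    · simpa [g] using hT1
    · simpa [g, (show l ≠ 0 by omega), (show l - 1 ≠ 0 by omega)] using hTl l hl2 hlL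
  have hratio : ∀ l, 1 ≤ l → l ≤ L → 0 < g l / g (l - 1) := fun l _ hlL =>
    div_pos (hg_pos l hlL) (hg_pos (l - 1) (by omega))
  have hstep : ∀ j, 1 ≤ j → j ≤ L → exp (lam * T j) - 1 = g j / g (j - 1) := fun j hj1 hjL => by
    rw [hT j hj1 hjL, exp_mul_one_div_mul_log_one_add hlam.ne' (by linarith [hratio j hj1 hjL])]
  have hprod : ∀ l, 1 ≤ l → l ≤ L → ∏ j ∈ Icc 1 l, (exp (lam * T j) - 1) = h l / (1 - S) := by
    intro l hl1 hlL
    rw [prod_congr rfl fun j hj => hstep j (mem_Icc.mp hj).1 ((mem_Icc.mp hj).2.trans hlL),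
      prod_Icc_div_pred (by omega) fun j hj => (hg_pos j (by omega)).ne']
    simp [g, (show l ≠ 0 by omega)]
  refine ⟨fun l hl1 hlL => hT l hl1 hlL ▸ one_div_mul_log_one_add_pos hlam (hratio l hl1 hlL),
    fun l hl1 hlL => ?_⟩
  rw [hprod l hl1 hlL, sum_congr rfl fun k hk => hprod k (mem_Icc.mp hk).1 (mem_Icc.mp hk).2,
    one_add_sum_div_one_sub_sum _ _ hsum.ne, div_div_div_cancel_right₀ (sub_pos.mpr hsum).ne',
    div_one]

/-- Inverse change of variables for MCDP (equation (7) of the paper): given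
hit probabilities `h_1, …, h_L > 0` with `∑ h_l < 1`, the timers
`T_1 = (1/λ)log(1 + h_1/(1 - ∑_l h_l))` and
`T_l = (1/λ)log(1 + h_l/h_{l-1})` for `l = 2, …, L` are positive and the MCDP
stationary hit probabilities computed from them recover `h`. -/
theorem stmt_13 (L : ℕ) (hL : 1 ≤ L) (lam : ℝ) (hlam : 0 < lam)
    (h : ℕ → ℝ) (hpos : ∀ l, 1 ≤ l → l ≤ L → 0 < h l)
    (hsum : ∑ l ∈ Finset.Icc 1 L, h l < 1)
    (T : ℕ → ℝ)
    (hT1 : T 1 = (1 / lam) *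
        Real.log (1 + h 1 / (1 - ∑ l ∈ Finset.Icc 1 L, h l)))
    (hTl : ∀ l, 2 ≤ l → l ≤ L →
        T l = (1 / lam) * Real.log (1 + h l / h (l - 1))) :
    (∀ l, 1 ≤ l → l ≤ L → 0 < T l) ∧
    (∀ l, 1 ≤ l → l ≤ L →
      (∏ j ∈ Finset.Icc 1 l, (Real.exp (lam * T j) - 1)) /
        (1 + ∑ k ∈ Finset.Icc 1 L, ∏ j ∈ Finset.Icc 1 k,
          (Real.exp (lam * T j) - 1)) = h l) :=
  stmt_13_general L lam hlam h hpos hsum T hT1 hTl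
end
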